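/- arXiv:1612.08244 — 2 statements merged into one kernel-verified Lean document; each statement's English description precedes it below -/
import Mathlib

section
/- Let L be a Leibniz algebra over a field 𝕜 whose center {c ∈ L : c∘e = e∘c = 0 for all e ∈ L} is trivial (equals {0}), and let K = {k ∈ L : (k,e) = 0 for all e ∈ L} be the kernel of the symmetric product. Then K is a two-sided ideal of L (e∘k ∈ K and k∘e ∈ K for all e ∈ L, k ∈ K), the Leibniz bracket descends to a well-defined bracket on the quotient L̃ = L/K by ē₁∘ē₂ ≔ (e₁∘e₂)‾, and L̃ is a fat Leibniz algebra, i.e. the induced symmetric product on L/K is non-degenerate. -/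
open scoped TensorProduct

universe u v w

/-- A (left) Leibniz algebra over a field `𝕜`. -/
structure LeibnizAlg (𝕜 : Type u) [Field 𝕜] (L : Type v) [AddCommGroup L] [Module 𝕜 L] where
  br : L →ₗ[𝕜] L →ₗ[𝕜] L
  leibniz : ∀ a b c : L, br a (br b c) = br (br a b) c + br b (br a c)

namespace LeibnizAlg

variable {𝕜 : Type u} [Field 𝕜] {L : Type v} [AddCommGroup L] [Module 𝕜 L]
variable (A : LeibnizAlg 𝕜 L)

/-- The left center `Z = {z | z ∘ e = 0 for all e}`. -/
def leftCenter : Submodule 𝕜 L where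
  carrier := {z | ∀ e : L, A.br z e = 0}
  add_mem' := by
    intro a b ha hb
    simp only [Set.mem_setOf_eq] at *
    intro e
    rw [map_add, LinearMap.add_apply, ha e, hb e, add_zero]
  zero_mem' := by
    simp only [Set.mem_setOf_eq]
    intro e
    rw [map_zero, LinearMap.zero_apply]
  smul_mem' := by
    intro c x hx
    simp only [Set.mem_setOf_eq] at *
    intro e
    rw [map_smul, LinearMap.smul_apply, hx e, smul_zero]

lemma mem_leftCenter_iff {z : L} : z ∈ A.leftCenter ↔ ∀ e : L, A.br z e = 0 := Iff.rfl

/-- The symmetric product `(a,b) = a∘b + b∘a`. -/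
def sp (a b : L) : L := A.br a b + A.br b a

lemma sp_mem (a b : L) : A.sp a b ∈ A.leftCenter := by
  rw [mem_leftCenter_iff]
  intro e
  have h1 := A.leibniz a b e
  have h2 := A.leibniz b a e
  have hx : A.br (A.br a b) e = A.br a (A.br b e) - A.br b (A.br a e) :=
    eq_sub_iff_add_eq.mpr h1.symm
  have hy : A.br (A.br b a) e = A.br b (A.br a e) - A.br a (A.br b e) :=
    eq_sub_iff_add_eq.mpr h2.symm
  rw [sp, map_add, LinearMap.add_apply, hx, hy]
  abel

/-- The symmetric product, seen as valued in the left center. -/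
def spZ (a b : L) : A.leftCenter := ⟨A.sp a b, A.sp_mem a b⟩

lemma br_mem (e : L) (f : A.leftCenter) : A.br e (f : L) ∈ A.leftCenter := by
  rw [mem_leftCenter_iff]
  intro e'
  have h := A.leibniz e (f : L) e'
  have hf : A.br (f : L) e' = 0 := (A.mem_leftCenter_iff.mp f.2) e'
  have hf2 : A.br (f : L) (A.br e e') = 0 := (A.mem_leftCenter_iff.mp f.2) _
  rw [hf] at h
  rw [map_zero] at h
  rw [hf2, add_zero] at h
  exact h.symm

/-- The bracket of `L` on its left center. -/
def brZ (e : L) (f : A.leftCenter) : A.leftCenter := ⟨A.br e (f : L), A.br_mem e f⟩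

/-- The symmetric product as a bilinear map into the left center. -/
noncomputable def spL : L →ₗ[𝕜] L →ₗ[𝕜] A.leftCenter :=
  LinearMap.mk₂ 𝕜 A.spZ
    (fun a a' b => Subtype.ext (by
      simp only [spZ, sp, map_add, LinearMap.add_apply, Submodule.coe_add]
      abel))
    (fun c a b => Subtype.ext (by
      simp only [spZ, sp, map_smul, LinearMap.smul_apply, SetLike.val_smul, smul_add]))
    (fun a b b' => Subtype.ext (by
      simp only [spZ, sp, map_add, LinearMap.add_apply, Submodule.coe_add]
      abel))
    (fun c a b => Subtype.ext (by
      simp only [spZ, sp, map_smul, LinearMap.smul_apply, SetLike.val_smul, smul_add]))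

end LeibnizAlg

/-- `(S, ι)` is (a model of) the symmetric algebra of the module `Z`:
it satisfies the universal property. -/
def IsSymAlg {𝕜 : Type u} [Field 𝕜] {Z : Type v} [AddCommGroup Z] [Module 𝕜 Z]
    (S : Type w) [CommRing S] [Algebra 𝕜 S] (ι : Z →ₗ[𝕜] S) : Prop :=
  ∀ (B : Type (max u v w)) [CommRing B] [Algebra 𝕜 B] (g : Z →ₗ[𝕜] B),
    ∃! h : S →ₐ[𝕜] B, ∀ z : Z, h (ι z) = g z

section Shuffles

/-- All ways of splitting a list into a signed pair of complementary subsequences. -/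
def shSplits {α : Type*} : List α → List (ℤ × List α × List α)
  | [] => [(1, [], [])]
  | a :: l =>
      ((shSplits l).map fun t => (t.1, a :: t.2.1, t.2.2)) ++
      ((shSplits l).map fun t => ((-1) ^ t.2.1.length * t.1, t.2.1, a :: t.2.2))

/-- Signed sum over all `(p, l.length - p)`-shuffles of the list `l`. -/
def shSum {α : Type*} {S : Type*} [AddCommGroup S] (p : ℕ) (l : List α)
    (F : List α → List α → S) : S :=
  (((shSplits l).filter fun t => t.2.1.length == p).map fun t => t.1 • F t.2.1 t.2.2).sum

/-- Unsigned sum over all `(p, l.length - p)`-shuffles of the list `l`. -/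
def shSumU {α : Type*} {S : Type*} [AddCommMonoid S] (p : ℕ) (l : List α)
    (F : List α → List α → S) : S :=
  (((shSplits l).filter fun t => t.2.1.length == p).map fun t => F t.2.1 t.2.2).sum

end Shuffles

section Cochains

variable {𝕜 : Type u} [Field 𝕜] {L : Type v} [AddCommGroup L] [Module 𝕜 L]
variable (A : LeibnizAlg 𝕜 L)
variable (S : Type w) [CommRing S] [Algebra 𝕜 S]
variable (ι : A.leftCenter →ₗ[𝕜] S)

/-- `ω` is an `n`-cochain in the standard complex `C(L) = C(L, Z, S^•(Z))`:
its component `ω k`, defined on tuples `es` of `n - 2k` elements of `L` and `k`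
elements of the left center, is multilinear, symmetric in the `Z`-arguments, and
weakly skew-symmetric in the `L`-arguments. -/
structure IsCochain (n : ℕ) (ω : ℕ → List L → List A.leftCenter → S) : Prop where
  add_e : ∀ (k : ℕ) (p q : List L) (x y : L) (fs : List A.leftCenter),
    2*k + (p.length + 1 + q.length) = n → fs.length = k →
    ω k (p ++ (x + y) :: q) fs = ω k (p ++ x :: q) fs + ω k (p ++ y :: q) fs
  smul_e : ∀ (k : ℕ) (p q : List L) (c : 𝕜) (x : L) (fs : List A.leftCenter),
    2*k + (p.length + 1 + q.length) = n → fs.length = k →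
    ω k (p ++ (c • x) :: q) fs = c • ω k (p ++ x :: q) fs
  add_f : ∀ (k : ℕ) (es : List L) (p q : List A.leftCenter) (x y : A.leftCenter),
    2*k + es.length = n → p.length + 1 + q.length = k →
    ω k es (p ++ (x + y) :: q) = ω k es (p ++ x :: q) + ω k es (p ++ y :: q)
  smul_f : ∀ (k : ℕ) (es : List L) (p q : List A.leftCenter) (c : 𝕜) (x : A.leftCenter),
    2*k + es.length = n → p.length + 1 + q.length = k →
    ω k es (p ++ (c • x) :: q) = c • ω k es (p ++ x :: q)
  symm_f : ∀ (k : ℕ) (es : List L) (p q : List A.leftCenter) (x y : A.leftCenter),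
    2*k + es.length = n → p.length + 2 + q.length = k →
    ω k es (p ++ x :: y :: q) = ω k es (p ++ y :: x :: q)
  skew : ∀ (k : ℕ) (p q : List L) (x y : L) (fs : List A.leftCenter),
    2*k + (p.length + 2 + q.length) = n → fs.length = k →
    ω k (p ++ x :: y :: q) fs + ω k (p ++ y :: x :: q) fs
      = - ω (k+1) (p ++ q) (A.spZ x y :: fs)

/-- The product of an `n`-cochain and an `m`-cochain. -/
def cmul (n m : ℕ) (ω η : ℕ → List L → List A.leftCenter → S) :
    ℕ → List L → List A.leftCenter → S :=
  fun k es fs => ∑ i ∈ Finset.range (k+1),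
    if 2*i ≤ n ∧ 2*(k-i) ≤ m then
      shSum (n - 2*i) es fun es₁ es₂ =>
        shSumU i fs fun fs₁ fs₂ => ω i es₁ fs₁ * η (k-i) es₂ fs₂
    else 0

/-- The operator `d₀` of the standard complex, where `ρ` is the action of `L` on
`S^•(Z)` by derivations. -/
def cd0 (ρ : L → Derivation 𝕜 S S) (ω : ℕ → List L → List A.leftCenter → S) :
    ℕ → List L → List A.leftCenter → S :=
  fun k es fs =>
    (∑ a ∈ Finset.range es.length,
      (-1 : ℤ)^a • ρ (es.getD a 0) (ω k (es.eraseIdx a) fs))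
    + ∑ a ∈ Finset.range es.length, ∑ b ∈ Finset.Ico (a+1) es.length,
        (-1 : ℤ)^(a+1) •
          ω k ((es.eraseIdx a).set (b-1) (A.br (es.getD a 0) (es.getD b 0))) fs

/-- The operator `δ` of the standard complex. -/
def cdel (ω : ℕ → List L → List A.leftCenter → S) :
    ℕ → List L → List A.leftCenter → S :=
  fun k es fs => ∑ j ∈ Finset.range fs.length,
    ω (k-1) (((fs.getD j 0 : A.leftCenter) : L) :: es) (fs.eraseIdx j)

/-- The symmetric product with values pushed into `S = S^•(Z)`. -/
noncomputable def spS : L →ₗ[𝕜] L →ₗ[𝕜] S := (A.spL).compr₂ ι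

/-- The `S^•(Z)`-bilinear extension of the symmetric product to `S^•(Z) ⊗ L`. -/
noncomputable def pairT : (S ⊗[𝕜] L) →ₗ[𝕜] (S ⊗[𝕜] L) →ₗ[𝕜] S :=
  TensorProduct.curry <|
    (TensorProduct.lift (LinearMap.mul 𝕜 S)).comp <|
      (TensorProduct.map (TensorProduct.lift (LinearMap.mul 𝕜 S))
        (TensorProduct.lift (spS A S ι))).comp
        (TensorProduct.tensorTensorTensorComm 𝕜 S L S L).toLinearMap

/-- `ω` is a representable `n`-cochain: each of the maps
`e ↦ ω k (es ++ [e]) fs` lies in the image of `φ = pairT`. -/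
def IsRepr (n : ℕ) (ω : ℕ → List L → List A.leftCenter → S) : Prop :=
  ∀ (k : ℕ) (es : List L) (fs : List A.leftCenter),
    2*k + (es.length + 1) = n → fs.length = k →
    ∃ x : S ⊗[𝕜] L, ∀ e : L, pairT A S ι x ((1 : S) ⊗ₜ[𝕜] e) = ω k (es ++ [e]) fs

/-- `ωt` is a choice of `φ`-preimages `ω̃` for the representable cochain `ω`. -/
def IsPre (n : ℕ) (ω : ℕ → List L → List A.leftCenter → S)
    (ωt : ℕ → List L → List A.leftCenter → S ⊗[𝕜] L) : Prop :=
  ∀ (k : ℕ) (es : List L) (fs : List A.leftCenter),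
    2*k + (es.length + 1) = n → fs.length = k →
    ∀ e : L, pairT A S ι (ωt k es fs) ((1 : S) ⊗ₜ[𝕜] e) = ω k (es ++ [e]) fs

/-- `ωc k es x fs` is the extension `ω̌` of `ω (k+1) es (·::fs)` from `Z` to all of
`S = S^•(Z)` in its first `Z`-slot, by the Leibniz rule. -/
structure IsExt (n : ℕ) (ω : ℕ → List L → List A.leftCenter → S)
    (ωc : ℕ → List L → S → List A.leftCenter → S) : Prop where
  on_gen : ∀ (k : ℕ) (es : List L) (fs : List A.leftCenter) (f : A.leftCenter),
    2*(k+1) + es.length = n → fs.length = k →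
    ωc k es (ι f) fs = ω (k+1) es (f :: fs)
  map_add : ∀ (k : ℕ) (es : List L) (fs : List A.leftCenter) (x y : S),
    2*(k+1) + es.length = n → fs.length = k →
    ωc k es (x + y) fs = ωc k es x fs + ωc k es y fs
  map_smul : ∀ (k : ℕ) (es : List L) (fs : List A.leftCenter) (c : 𝕜) (x : S),
    2*(k+1) + es.length = n → fs.length = k →
    ωc k es (c • x) fs = c • ωc k es x fs
  mul_rule : ∀ (k : ℕ) (es : List L) (fs : List A.leftCenter) (x y : S),
    2*(k+1) + es.length = n → fs.length = k →
    ωc k es (x * y) fs = x * ωc k es y fs + y * ωc k es x fs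

/-- The operation `ω ◇ η` built from the Leibniz-rule extension `ωc` of `ω`. -/
def cdiam (n m : ℕ) (ωc : ℕ → List L → S → List A.leftCenter → S)
    (η : ℕ → List L → List A.leftCenter → S) : ℕ → List L → List A.leftCenter → S :=
  fun k es fs => ∑ i ∈ Finset.range (k+1),
    if 2*(i+1) ≤ n ∧ 2*(k-i) ≤ m then
      shSum (n - 2*i - 2) es fun es₁ es₂ =>
        shSumU (k-i) fs fun fs₁ fs₂ => ωc i es₁ (η (k-i) es₂ fs₁) fs₂
    else 0

/-- The operation `ω • η` built from chosen `φ`-preimages `ωt`, `ηt`. -/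
noncomputable def cbull (n m : ℕ)
    (ωt ηt : ℕ → List L → List A.leftCenter → S ⊗[𝕜] L) :
    ℕ → List L → List A.leftCenter → S :=
  fun k es fs => (-1 : ℤ)^(m-1) • ∑ i ∈ Finset.range (k+1),
    if 2*i + 1 ≤ n ∧ 2*(k-i) + 1 ≤ m then
      shSum (n - 2*i - 1) es fun es₁ es₂ =>
        shSumU i fs fun fs₁ fs₂ => pairT A S ι (ωt i es₁ fs₁) (ηt (k-i) es₂ fs₂)
    else 0

/-- The bracket `{ω, η} = ω•η + ω◇η − (−1)^{nm} η◇ω` of representable cochains. -/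
noncomputable def cpbr (n m : ℕ)
    (ω η : ℕ → List L → List A.leftCenter → S)
    (ωt ηt : ℕ → List L → List A.leftCenter → S ⊗[𝕜] L)
    (ωc ηc : ℕ → List L → S → List A.leftCenter → S) :
    ℕ → List L → List A.leftCenter → S :=
  fun k es fs => cbull A S ι n m ωt ηt k es fs + cdiam A S n m ωc η k es fs
    - (-1 : ℤ)^(n*m) • cdiam A S m n ηc ω k es fs

/-- The canonical 3-cochain `Θ`. -/
def ThetaC : ℕ → List L → List A.leftCenter → S :=
  fun k es fs => match k, es, fs with
    | 0, [e₁, e₂, e₃], [] => ι (A.spZ (A.br e₁ e₂) e₃)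
    | 1, [e], [f] => - ι (A.spZ e (f : L))
    | _, _, _ => 0

/-- The 2-cochain `ζ` with `ζ₀ = (·,·)` and `ζ₁(f) = −2f`. -/
def zetaC : ℕ → List L → List A.leftCenter → S :=
  fun k es fs => match k, es, fs with
    | 0, [e₁, e₂], [] => ι (A.spZ e₁ e₂)
    | 1, [], [f] => (-2 : 𝕜) • ι f
    | _, _, _ => 0

/-- The representable 1-cochain `e^♭ = (e, ·)`. -/
def eflat (e : L) : ℕ → List L → List A.leftCenter → S :=
  fun k es fs => match k, es, fs with
    | 0, [e'], [] => ι (A.spZ e e')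
    | _, _, _ => 0

end Cochains

section Theorems

variable {𝕜 : Type u} [Field 𝕜] {L : Type v} [AddCommGroup L] [Module 𝕜 L]

theorem quotient_fat (A : LeibnizAlg 𝕜 L)
    (hcenter : ∀ c : L, (∀ e : L, A.br c e = 0 ∧ A.br e c = 0) → c = 0) :
    (∀ e k : L, (∀ e' : L, A.sp k e' = 0) →
      (∀ e' : L, A.sp (A.br e k) e' = 0) ∧ (∀ e' : L, A.sp (A.br k e) e' = 0)) ∧
    (∀ e₁ e₁' e₂ e₂' : L,
      (∀ e' : L, A.sp (e₁ - e₁') e' = 0) → (∀ e' : L, A.sp (e₂ - e₂') e' = 0) →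
      ∀ e' : L, A.sp (A.br e₁ e₂ - A.br e₁' e₂') e' = 0) ∧
    (∀ x : L, (∀ y e' : L, A.sp (A.sp x y) e' = 0) → ∀ e' : L, A.sp x e' = 0) := by
  -- invariance: e ∘ (a,b) = (e∘a, b) + (e∘b, a)
  have inv : ∀ e a b : L, A.br e (A.sp a b) = A.sp (A.br e a) b + A.sp (A.br e b) a := by
    intro e a b
    simp only [LeibnizAlg.sp, map_add]
    rw [A.leibniz e a b, A.leibniz e b a]
    abel
  -- linearity of sp in the first argument
  have sp_lin : ∀ a b c : L, A.sp (a - b) c = A.sp a c - A.sp b c := by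
    intro a b c
    simp only [LeibnizAlg.sp, map_sub, LinearMap.sub_apply]
    abel
  have sp_add : ∀ a b c : L, A.sp (a + b) c = A.sp a c + A.sp b c := by
    intro a b c
    simp only [LeibnizAlg.sp, map_add, LinearMap.add_apply]
    abel
  have sp_neg : ∀ a c : L, A.sp (-a) c = - A.sp a c := by
    intro a c
    simp only [LeibnizAlg.sp, map_neg, LinearMap.neg_apply]
    abel
  -- part (1): K is a two-sided ideal
  have h1 : ∀ e k : L, (∀ e' : L, A.sp k e' = 0) →
      (∀ e' : L, A.sp (A.br e k) e' = 0) ∧ (∀ e' : L, A.sp (A.br k e) e' = 0) := by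
    intro e k hk
    have hek : ∀ e' : L, A.sp (A.br e k) e' = 0 := by
      intro e'
      have := inv e k e'
      rw [hk e', map_zero] at this
      have h2 : A.sp (A.br e e') k = A.sp k (A.br e e') := by
        simp only [LeibnizAlg.sp]; abel
      rw [h2, hk (A.br e e'), add_zero] at this
      exact this.symm
    refine ⟨hek, ?_⟩
    -- br k e = - br e k since sp k e = 0
    have hke : A.br k e = - A.br e k := by
      have := hk e
      simp only [LeibnizAlg.sp] at this
      exact eq_neg_of_add_eq_zero_left this
    intro e'
    rw [hke, sp_neg, hek e', neg_zero]
  refine ⟨h1, ?_, ?_⟩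
  · -- part (2): bracket descends to the quotient
    intro e₁ e₁' e₂ e₂' h₁ h₂ e'
    have key : A.br e₁ e₂ - A.br e₁' e₂' =
        A.br (e₁ - e₁') e₂ + A.br e₁' (e₂ - e₂') := by
      simp only [map_sub, LinearMap.sub_apply]
      abel
    rw [key, sp_add]
    have t1 := (h1 e₂ (e₁ - e₁') h₁).2 e'
    have t2 := (h1 e₁' (e₂ - e₂') h₂).1 e'
    rw [t1, t2, add_zero]
  · -- part (3): non-degeneracy on the quotient
    intro x hx e'
    apply hcenter
    intro e
    constructor
    · exact (A.mem_leftCenter_iff.mp (A.sp_mem x e')) e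
    · -- sp (sp x e') e = 0 and br (sp x e') e = 0, so br e (sp x e') = 0
      have hz := hx e' e
      simp only [LeibnizAlg.sp] at hz ⊢
      have hl : A.br (A.br x e' + A.br e' x) e = 0 :=
        (A.mem_leftCenter_iff.mp (A.sp_mem x e')) e
      have : A.br e (A.br x e' + A.br e' x) = 0 := by
        have := hz
        rw [hl, zero_add] at this
        exact this
      exact this

end Theorems
end

section
/- Let L be a Leibniz algebra over a field 𝕜 with left center Z, Θ the canonical 3-cochain and e^♭ the representable 1-cochain (e,·). Then for all e₁ ∈ L, the 2-cochain {Θ, e₁^♭} is representable with components {Θ,e₁^♭}₀(e₂,e₃) = (e₁∘e₂, e₃) and {Θ,e₁^♭}₁(f) = −(e₁,f), and for all e₁,e₂ ∈ L the iterated derived bracket represents the Leibniz bracket: (e₁∘e₂)^♭ = −{{Θ, e₁^♭}, e₂^♭}, i.e. −{{Θ,e₁^♭},e₂^♭}₀(e₃) = (e₁∘e₂, e₃) for all e₃ ∈ L. In particular, if L is fat (the symmetric product is non-degenerate), then e₁∘e₂ is the unique element of L whose image under (·)^♭ equals −{{Θ,e₁^♭},e₂^♭}. -/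
open scoped TensorProduct

universe u v w

section PairT
variable {𝕜 : Type u} [Field 𝕜] {L : Type v} [AddCommGroup L] [Module 𝕜 L]
variable (A : LeibnizAlg 𝕜 L)
variable (S : Type w) [CommRing S] [Algebra 𝕜 S]
variable (ι : A.leftCenter →ₗ[𝕜] S)

lemma pairT_tmul (s s' : S) (e e' : L) :
    pairT A S ι (s ⊗ₜ[𝕜] e) (s' ⊗ₜ[𝕜] e') = s * s' * ι (A.spZ e e') := by
  simp [pairT, spS, LeibnizAlg.spL]

lemma pairT_symm (x y : S ⊗[𝕜] L) : pairT A S ι x y = pairT A S ι y x := by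
  induction x using TensorProduct.induction_on with
  | zero => simp
  | tmul s e =>
    induction y using TensorProduct.induction_on with
    | zero => simp
    | tmul s' e' =>
        rw [pairT_tmul, pairT_tmul]
        have : A.spZ e e' = A.spZ e' e := by
          apply Subtype.ext; simp [LeibnizAlg.spZ, LeibnizAlg.sp]; abel
        rw [this]; ring
    | add y₁ y₂ h1 h2 => simp [map_add, h1, h2]
  | add x₁ x₂ h1 h2 => simp [map_add, h1, h2]

lemma pairT_tmul_right (x : S ⊗[𝕜] L) (s : S) (e : L) :
    pairT A S ι x (s ⊗ₜ[𝕜] e) = s * pairT A S ι x ((1:S) ⊗ₜ[𝕜] e) := by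
  induction x using TensorProduct.induction_on with
  | zero => simp
  | tmul s' e' => rw [pairT_tmul, pairT_tmul]; ring
  | add x₁ x₂ h1 h2 => simp [map_add, h1, h2]; ring

lemma pairT_ext {x x' : S ⊗[𝕜] L}
    (h : ∀ e : L, pairT A S ι x ((1:S) ⊗ₜ[𝕜] e) = pairT A S ι x' ((1:S) ⊗ₜ[𝕜] e)) :
    ∀ y, pairT A S ι x y = pairT A S ι x' y := by
  intro y
  induction y using TensorProduct.induction_on with
  | zero => simp
  | tmul s e => rw [pairT_tmul_right, h, ← pairT_tmul_right]
  | add y₁ y₂ h1 h2 => simp [map_add, h1, h2]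

end PairT
section Eval
variable {𝕜 : Type u} [Field 𝕜] {L : Type v} [AddCommGroup L] [Module 𝕜 L]
variable (A : LeibnizAlg 𝕜 L)
variable (S : Type w) [CommRing S] [Algebra 𝕜 S]
variable (ι : A.leftCenter →ₗ[𝕜] S)

example (ωt ηt : ℕ → List L → List A.leftCenter → S ⊗[𝕜] L) (a b : L) :
    cbull A S ι 3 1 ωt ηt 0 [a, b] [] = pairT A S ι (ωt 0 [a,b] []) (ηt 0 [] []) := by
  simp [cbull, shSum, shSumU, shSplits]

example (ωt ηt : ℕ → List L → List A.leftCenter → S ⊗[𝕜] L) (f : A.leftCenter) :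
    cbull A S ι 3 1 ωt ηt 1 [] [f] = pairT A S ι (ωt 1 [] [f]) (ηt 0 [] []) := by
  simp [cbull, shSum, shSumU, shSplits, Finset.sum_range_succ]

example (ωc : ℕ → List L → S → List A.leftCenter → S)
    (η : ℕ → List L → List A.leftCenter → S) (a b : L) :
    cdiam A S 3 1 ωc η 0 [a, b] []
      = ωc 0 [a] (η 0 [b] []) [] - ωc 0 [b] (η 0 [a] []) [] := by
  simp [cdiam, shSum, shSumU, shSplits]
  abel

example (ωc : ℕ → List L → S → List A.leftCenter → S)
    (η : ℕ → List L → List A.leftCenter → S) (f : A.leftCenter) :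
    cdiam A S 3 1 ωc η 1 [] [f] = 0 := by
  simp [cdiam, shSum, shSumU, shSplits, Finset.sum_range_succ]

example (ωc : ℕ → List L → S → List A.leftCenter → S)
    (η : ℕ → List L → List A.leftCenter → S) (a b : L) :
    cdiam A S 1 3 ωc η 0 [a, b] [] = 0 := by
  simp [cdiam, shSum, shSumU, shSplits]

example (ωc : ℕ → List L → S → List A.leftCenter → S)
    (η : ℕ → List L → List A.leftCenter → S) (f : A.leftCenter) :
    cdiam A S 1 3 ωc η 1 [] [f] = 0 := by
  simp [cdiam, shSum, shSumU, shSplits, Finset.sum_range_succ]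

end Eval
section Aux
variable {𝕜 : Type u} [Field 𝕜] {L : Type v} [AddCommGroup L] [Module 𝕜 L]
variable (A : LeibnizAlg 𝕜 L)
variable (S : Type w) [CommRing S] [Algebra 𝕜 S]
variable (ι : A.leftCenter →ₗ[𝕜] S)

lemma sp_id1 (e₁ e₂ e₃ : L) :
    A.sp (A.br e₂ e₃) e₁ - A.sp e₂ (A.sp e₁ e₃) + A.sp e₃ (A.sp e₁ e₂)
      = A.sp (A.br e₁ e₂) e₃ := by
  have hz : ∀ a b c : L, A.br (A.sp a b) c = 0 := fun a b c => (A.sp_mem a b) c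
  have k1 := hz e₁ e₂ e₃
  have k2 := hz e₁ e₃ e₂
  simp only [LeibnizAlg.sp, map_add, LinearMap.add_apply, hz] at k1 k2 ⊢
  have k1' : A.br (A.br e₂ e₁) e₃ = -(A.br (A.br e₁ e₂) e₃) := by
    rw [eq_neg_iff_add_eq_zero, add_comm]; exact k1
  have k2' : A.br (A.br e₃ e₁) e₂ = -(A.br (A.br e₁ e₃) e₂) := by
    rw [eq_neg_iff_add_eq_zero, add_comm]; exact k2
  rw [A.leibniz e₁ e₂ e₃, A.leibniz e₂ e₃ e₁, k1', k2']
  abel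

lemma sp_id2 (e₁ e₂ e₃ : L) :
    A.sp e₁ (A.sp e₂ e₃) - A.sp e₂ (A.br e₁ e₃) = A.sp (A.br e₁ e₂) e₃ := by
  have hz : ∀ a b c : L, A.br (A.sp a b) c = 0 := fun a b c => (A.sp_mem a b) c
  have k3 := hz e₂ e₃ e₁
  simp only [LeibnizAlg.sp, map_add, LinearMap.add_apply, hz] at k3 ⊢
  have k3' : A.br (A.br e₃ e₂) e₁ = -(A.br (A.br e₂ e₃) e₁) := by
    rw [eq_neg_iff_add_eq_zero, add_comm]; exact k3
  rw [A.leibniz e₁ e₂ e₃, A.leibniz e₁ e₃ e₂, k3']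
  abel

lemma iota_inj (hS : IsSymAlg S ι) : Function.Injective ι := by
  letI : Module 𝕜ᵐᵒᵖ A.leftCenter :=
    Module.compHom _ ((RingHom.id 𝕜).fromOpposite mul_comm)
  letI : IsCentralScalar 𝕜 A.leftCenter := ⟨fun r m => rfl⟩
  obtain ⟨h, hh, -⟩ := hS (ULift.{max u w} (TrivSqZeroExt 𝕜 A.leftCenter))
    ((ULift.moduleEquiv : ULift (TrivSqZeroExt 𝕜 A.leftCenter) ≃ₗ[𝕜] _).symm.toLinearMap
      ∘ₗ TrivSqZeroExt.inrHom 𝕜 A.leftCenter)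
  intro z z' hzz
  have h1 := hh z
  rw [hzz, hh z'] at h1
  have h2 := congrArg (ULift.moduleEquiv (R := 𝕜)) h1
  simp only [LinearMap.coe_comp, LinearEquiv.coe_coe, Function.comp_apply,
    LinearEquiv.apply_symm_apply, TrivSqZeroExt.inrHom_apply] at h2
  exact (TrivSqZeroExt.inr_injective h2).symm

end Aux
section Eval2
variable {𝕜 : Type u} [Field 𝕜] {L : Type v} [AddCommGroup L] [Module 𝕜 L]
variable (A : LeibnizAlg 𝕜 L)
variable (S : Type w) [CommRing S] [Algebra 𝕜 S]
variable (ι : A.leftCenter →ₗ[𝕜] S)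

lemma cbull31_0 (ωt ηt : ℕ → List L → List A.leftCenter → S ⊗[𝕜] L) (a b : L) :
    cbull A S ι 3 1 ωt ηt 0 [a, b] [] = pairT A S ι (ωt 0 [a,b] []) (ηt 0 [] []) := by
  simp [cbull, shSum, shSumU, shSplits]

lemma cbull31_1 (ωt ηt : ℕ → List L → List A.leftCenter → S ⊗[𝕜] L) (f : A.leftCenter) :
    cbull A S ι 3 1 ωt ηt 1 [] [f] = pairT A S ι (ωt 1 [] [f]) (ηt 0 [] []) := by
  simp [cbull, shSum, shSumU, shSplits, Finset.sum_range_succ]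

lemma cdiam31_0 (ωc : ℕ → List L → S → List A.leftCenter → S)
    (η : ℕ → List L → List A.leftCenter → S) (a b : L) :
    cdiam A S 3 1 ωc η 0 [a, b] []
      = ωc 0 [a] (η 0 [b] []) [] - ωc 0 [b] (η 0 [a] []) [] := by
  simp [cdiam, shSum, shSumU, shSplits]
  abel

lemma cdiam31_1 (ωc : ℕ → List L → S → List A.leftCenter → S)
    (η : ℕ → List L → List A.leftCenter → S) (f : A.leftCenter) :
    cdiam A S 3 1 ωc η 1 [] [f] = 0 := by
  simp [cdiam, shSum, shSumU, shSplits, Finset.sum_range_succ]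

lemma cdiam13_0 (ωc : ℕ → List L → S → List A.leftCenter → S)
    (η : ℕ → List L → List A.leftCenter → S) (a b : L) :
    cdiam A S 1 3 ωc η 0 [a, b] [] = 0 := by
  simp [cdiam, shSum, shSumU, shSplits]

lemma cdiam13_1 (ωc : ℕ → List L → S → List A.leftCenter → S)
    (η : ℕ → List L → List A.leftCenter → S) (f : A.leftCenter) :
    cdiam A S 1 3 ωc η 1 [] [f] = 0 := by
  simp [cdiam, shSum, shSumU, shSplits, Finset.sum_range_succ]

lemma cbull21_0 (ωt ηt : ℕ → List L → List A.leftCenter → S ⊗[𝕜] L) (a : L) :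
    cbull A S ι 2 1 ωt ηt 0 [a] [] = pairT A S ι (ωt 0 [a] []) (ηt 0 [] []) := by
  simp [cbull, shSum, shSumU, shSplits]

lemma cdiam21_0 (ωc : ℕ → List L → S → List A.leftCenter → S)
    (η : ℕ → List L → List A.leftCenter → S) (a : L) :
    cdiam A S 2 1 ωc η 0 [a] [] = ωc 0 [] (η 0 [a] []) [] := by
  simp [cdiam, shSum, shSumU, shSplits]

lemma cdiam12_0 (ωc : ℕ → List L → S → List A.leftCenter → S)
    (η : ℕ → List L → List A.leftCenter → S) (a : L) :
    cdiam A S 1 2 ωc η 0 [a] [] = 0 := by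
  simp [cdiam, shSum, shSumU, shSplits]

end Eval2

section Theorems

variable {𝕜 : Type u} [Field 𝕜] {L : Type v} [AddCommGroup L] [Module 𝕜 L]

theorem derived_bracket (A : LeibnizAlg 𝕜 L) (S : Type w) [CommRing S] [Algebra 𝕜 S]
    (ι : A.leftCenter →ₗ[𝕜] S) (hS : IsSymAlg S ι)
    (e₁ e₂ : L)
    (Θt : ℕ → List L → List A.leftCenter → S ⊗[𝕜] L)
    (hΘt : IsPre A S ι 3 (ThetaC A S ι) Θt)
    (Θc : ℕ → List L → S → List A.leftCenter → S)
    (hΘc : IsExt A S ι 3 (ThetaC A S ι) Θc)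
    (e₁t : ℕ → List L → List A.leftCenter → S ⊗[𝕜] L)
    (he₁t : IsPre A S ι 1 (eflat A S ι e₁) e₁t)
    (e₁c : ℕ → List L → S → List A.leftCenter → S)
    (he₁c : IsExt A S ι 1 (eflat A S ι e₁) e₁c)
    (e₂t : ℕ → List L → List A.leftCenter → S ⊗[𝕜] L)
    (he₂t : IsPre A S ι 1 (eflat A S ι e₂) e₂t)
    (e₂c : ℕ → List L → S → List A.leftCenter → S)
    (he₂c : IsExt A S ι 1 (eflat A S ι e₂) e₂c)
    (bt : ℕ → List L → List A.leftCenter → S ⊗[𝕜] L)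
    (hbt : IsPre A S ι 2 (cpbr A S ι 3 1 (ThetaC A S ι) (eflat A S ι e₁) Θt e₁t Θc e₁c) bt)
    (bc : ℕ → List L → S → List A.leftCenter → S)
    (hbc : IsExt A S ι 2 (cpbr A S ι 3 1 (ThetaC A S ι) (eflat A S ι e₁) Θt e₁t Θc e₁c) bc) :
    (∀ e₂' e₃ : L,
      cpbr A S ι 3 1 (ThetaC A S ι) (eflat A S ι e₁) Θt e₁t Θc e₁c 0 [e₂', e₃] []
        = ι (A.spZ (A.br e₁ e₂') e₃)) ∧
    (∀ f : A.leftCenter,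
      cpbr A S ι 3 1 (ThetaC A S ι) (eflat A S ι e₁) Θt e₁t Θc e₁c 1 [] [f]
        = - ι (A.spZ e₁ (f : L))) ∧
    IsRepr A S ι 2 (cpbr A S ι 3 1 (ThetaC A S ι) (eflat A S ι e₁) Θt e₁t Θc e₁c) ∧
    (∀ e₃ : L,
      - cpbr A S ι 2 1 (cpbr A S ι 3 1 (ThetaC A S ι) (eflat A S ι e₁) Θt e₁t Θc e₁c)
          (eflat A S ι e₂) bt e₂t bc e₂c 0 [e₃] []
        = ι (A.spZ (A.br e₁ e₂) e₃)) ∧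
    ((∀ x : L, (∀ y : L, A.sp x y = 0) → x = 0) →
      (∀ e₃ : L,
        ι (A.spZ (A.br e₁ e₂) e₃)
          = - cpbr A S ι 2 1 (cpbr A S ι 3 1 (ThetaC A S ι) (eflat A S ι e₁) Θt e₁t Θc e₁c)
              (eflat A S ι e₂) bt e₂t bc e₂c 0 [e₃] []) ∧
      (∀ z : L,
        (∀ e₃ : L,
          ι (A.spZ z e₃)
            = - cpbr A S ι 2 1 (cpbr A S ι 3 1 (ThetaC A S ι) (eflat A S ι e₁) Θt e₁t Θc e₁c)
                (eflat A S ι e₂) bt e₂t bc e₂c 0 [e₃] []) → z = A.br e₁ e₂)) := by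
  have hext1 : ∀ y, pairT A S ι (e₁t 0 [] []) y = pairT A S ι ((1:S) ⊗ₜ[𝕜] e₁) y := by
    apply pairT_ext
    intro e
    rw [he₁t 0 [] [] rfl rfl e, pairT_tmul]
    simp [eflat]
  have hext2 : ∀ y, pairT A S ι (e₂t 0 [] []) y = pairT A S ι ((1:S) ⊗ₜ[𝕜] e₂) y := by
    apply pairT_ext
    intro e
    rw [he₂t 0 [] [] rfl rfl e, pairT_tmul]
    simp [eflat]
  have claim1 : ∀ a b : L,
      cpbr A S ι 3 1 (ThetaC A S ι) (eflat A S ι e₁) Θt e₁t Θc e₁c 0 [a, b] []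
        = ι (A.spZ (A.br e₁ a) b) := by
    intro a b
    have hcb : cbull A S ι 3 1 Θt e₁t 0 [a,b] [] = ι (A.spZ (A.br a b) e₁) := by
      rw [cbull31_0, pairT_symm, hext1, pairT_symm, hΘt 0 [a,b] [] rfl rfl e₁]
      simp [ThetaC]
    have hcd : cdiam A S 3 1 Θc (eflat A S ι e₁) 0 [a,b] []
        = - ι (A.spZ a ((A.spZ e₁ b : A.leftCenter) : L))
          + ι (A.spZ b ((A.spZ e₁ a : A.leftCenter) : L)) := by
      rw [cdiam31_0]
      have h1 : (eflat A S ι e₁) 0 [b] [] = ι (A.spZ e₁ b) := rfl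
      have h2 : (eflat A S ι e₁) 0 [a] [] = ι (A.spZ e₁ a) := rfl
      rw [h1, h2, hΘc.on_gen 0 [a] [] _ rfl rfl, hΘc.on_gen 0 [b] [] _ rfl rfl]
      simp [ThetaC]
    have hid : A.spZ (A.br a b) e₁ - A.spZ a ((A.spZ e₁ b : A.leftCenter) : L)
        + A.spZ b ((A.spZ e₁ a : A.leftCenter) : L) = A.spZ (A.br e₁ a) b := by
      apply Subtype.ext
      simpa [LeibnizAlg.spZ] using sp_id1 A e₁ a b
    simp only [cpbr, hcb, hcd, cdiam13_0]
    rw [← hid]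
    simp only [map_add, map_sub, smul_zero, sub_zero]
    all_goals abel
  have claim2 : ∀ f : A.leftCenter,
      cpbr A S ι 3 1 (ThetaC A S ι) (eflat A S ι e₁) Θt e₁t Θc e₁c 1 [] [f]
        = - ι (A.spZ e₁ (f : L)) := by
    intro f
    have hcb : cbull A S ι 3 1 Θt e₁t 1 [] [f] = - ι (A.spZ e₁ (f : L)) := by
      rw [cbull31_1, pairT_symm, hext1, pairT_symm, hΘt 1 [] [f] rfl rfl e₁]
      simp [ThetaC]
    simp only [cpbr, hcb, cdiam31_1, cdiam13_1, smul_zero, sub_zero, add_zero]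
  have claim3 : IsRepr A S ι 2
      (cpbr A S ι 3 1 (ThetaC A S ι) (eflat A S ι e₁) Θt e₁t Θc e₁c) := by
    intro k es fs hlen hfs
    have hk : k = 0 := by omega
    subst hk
    have hfs0 : fs = [] := List.length_eq_zero_iff.mp hfs
    subst hfs0
    have hes : es.length = 1 := by omega
    obtain ⟨a, rfl⟩ := List.length_eq_one_iff.mp hes
    refine ⟨(1:S) ⊗ₜ[𝕜] (A.br e₁ a), fun e => ?_⟩
    rw [pairT_tmul]
    simp only [one_mul, List.cons_append, List.nil_append]
    exact (claim1 a e).symm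
  have claim4 : ∀ a : L,
      - cpbr A S ι 2 1 (cpbr A S ι 3 1 (ThetaC A S ι) (eflat A S ι e₁) Θt e₁t Θc e₁c)
          (eflat A S ι e₂) bt e₂t bc e₂c 0 [a] []
        = ι (A.spZ (A.br e₁ e₂) a) := by
    intro a
    have hbtx : ∀ y, pairT A S ι (bt 0 [a] []) y
        = pairT A S ι ((1:S) ⊗ₜ[𝕜] (A.br e₁ a)) y := by
      apply pairT_ext
      intro e
      rw [hbt 0 [a] [] rfl rfl e, pairT_tmul]
      simp only [one_mul, List.cons_append, List.nil_append]
      exact claim1 a e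
    have hcb : cbull A S ι 2 1 bt e₂t 0 [a] [] = ι (A.spZ e₂ (A.br e₁ a)) := by
      rw [cbull21_0, hbtx, pairT_symm, he₂t 0 [] [] rfl rfl (A.br e₁ a)]
      simp [eflat]
    have hcd : cdiam A S 2 1 bc (eflat A S ι e₂) 0 [a] []
        = - ι (A.spZ e₁ ((A.spZ e₂ a : A.leftCenter) : L)) := by
      rw [cdiam21_0]
      have h1 : (eflat A S ι e₂) 0 [a] [] = ι (A.spZ e₂ a) := rfl
      rw [h1, hbc.on_gen 0 [] [] _ rfl rfl, claim2]
    have hid : A.spZ e₁ ((A.spZ e₂ a : A.leftCenter) : L) - A.spZ e₂ (A.br e₁ a)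
        = A.spZ (A.br e₁ e₂) a := by
      apply Subtype.ext
      simpa [LeibnizAlg.spZ] using sp_id2 A e₁ e₂ a
    simp only [cpbr, hcb, hcd, cdiam12_0]
    rw [← hid]
    simp only [map_sub, smul_zero, sub_zero]
    all_goals abel
  refine ⟨claim1, claim2, claim3, claim4, fun hfat => ⟨fun a => (claim4 a).symm,
    fun z hz => ?_⟩⟩
  have hinj := iota_inj A S ι hS
  have hsp : ∀ a : L, A.sp (z - A.br e₁ e₂) a = 0 := by
    intro a
    have h1 : ι (A.spZ z a) = ι (A.spZ (A.br e₁ e₂) a) := (hz a).trans (claim4 a)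
    have h3 : A.sp z a = A.sp (A.br e₁ e₂) a := congrArg Subtype.val (hinj h1)
    have h4 : A.sp (z - A.br e₁ e₂) a = A.sp z a - A.sp (A.br e₁ e₂) a := by
      simp only [LeibnizAlg.sp, map_sub, LinearMap.sub_apply]
      abel
    rw [h4, h3, sub_self]
  exact sub_eq_zero.mp (hfat _ hsp)

end Theorems
end
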